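/- Let (Z,d) be a metric space, U a finite nonempty set, β ∈ (0,1) with βα_Z < 1, c : Z×U → ℝ bounded measurable with |c(z,u) − c(z',u)| ≤ ‖c‖_∞ d(z,z') for all z, z' ∈ Z and u ∈ U, and let η be a Markov kernel from Z×U to Z satisfying the bounded-Lipschitz contraction condition with constant α_Z. Let F : Z → Z be measurable with sup_{z∈Z} d(z, F(z)) ≤ L̄ < ∞. Let J* : Z → ℝ be a bounded Lipschitz function satisfying J*(z) = min_{u∈U} ( c(z,u) + β ∫ J*(z₁) η(dz₁|z,u) ) for all z, and let J^N : Z → ℝ be a bounded measurable function satisfying J^N(z) = min_{u∈U} ( c(F(z),u) + β ∫ J^N(z₁) η(dz₁|F(z),u) ) for all z. Then sup_{z∈Z} |J^N(z) − J*(z)| ≤ ( ((α_Z − 1)β + 1) / ((1 − β)² (1 − α_Z β)) ) ‖c‖_∞ L̄. -/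

import Mathlib

open MeasureTheory

noncomputable section

/-- `‖f‖_BL ≤ c` with respect to the distance-like function `d`:
there are `a, b ≥ 0` with `a + b ≤ c` such that `f` is bounded by `a` and
`b`-Lipschitz with respect to `d`. -/
def blNormLE {S : Type*} (d : S → S → ℝ) (f : S → ℝ) (c : ℝ) : Prop :=
  ∃ a b : ℝ, 0 ≤ a ∧ 0 ≤ b ∧ a + b ≤ c ∧ (∀ x, |f x| ≤ a) ∧
    ∀ x y, |f x - f y| ≤ b * d x y

/-- Sup norm `‖c‖_∞` of a two-variable (stage cost) function. -/
def supNorm {Z U : Type*} (c : Z → U → ℝ) : ℝ :=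
  ⨆ p : Z × U, |c p.1 p.2|

/-- The bounded-Lipschitz contraction condition for the kernel `η` with constant `αZ`:
`|∫ f dη(·|z,u) − ∫ f dη(·|z',u)| ≤ αZ ‖f‖_BL d(z,z')` for every bounded Lipschitz `f`. -/
def blContract {Z U : Type*} [MeasurableSpace Z] [MetricSpace Z]
    (η : Z → U → Measure Z) (αZ : ℝ) : Prop :=
  ∀ (f : Z → ℝ) (C : ℝ), blNormLE dist f C → ∀ (u : U) (z z' : Z),
    |∫ x, f x ∂(η z u) - ∫ x, f x ∂(η z' u)| ≤ αZ * C * dist z z'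

end

/-!
Write `T J (z) = min_u (c(z,u) + β ∫ J dη(·|z,u))` for the Bellman operator. The sup norm and
Lipschitz constant of `J*` and then `‖J^N - J*‖_∞` are bounded in turn, each by an affine
estimate `a ↦ K + q a` with `q < 1` that maps a closed set of admissible constants into itself,
so that the set contains the fixed point `K / (1 - q)`.
From `J* = T J*`: `‖J*‖_∞ ≤ ‖c‖_∞ / (1 - β)`, and then, by the BL contraction of `η`,
`Lip(J*) ≤ L := (‖c‖_∞ + β α_Z ‖J*‖_∞) / (1 - β α_Z)`. Comparing `J^N = T J^N ∘ F` with `J*`,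
`|J^N z - J* z| ≤ |T J^N (F z) - T J* (F z)| + |J* (F z) - J* z| ≤ β ‖J^N - J*‖_∞ + L L̄`,
so `‖J^N - J*‖_∞ ≤ L L̄ / (1 - β)`, which is the claimed constant.
-/

open MeasureTheory Filter Topology Set

theorem IsClosed.div_one_sub_mem_of_forall_add_mul_mem {S : Set ℝ} (hS : IsClosed S)
    {q K a₀ : ℝ} (hq0 : 0 ≤ q) (hq1 : q < 1) (ha₀ : a₀ ∈ S)
    (hmaps : ∀ a ∈ S, K + q * a ∈ S) : K / (1 - q) ∈ S := by
  set A := K / (1 - q)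
  have hfix : K + q * A = A := by
    simp only [A]
    field_simp [(sub_pos.2 hq1).ne']
    ring
  have hiter : ∀ n : ℕ, A + q ^ n * (a₀ - A) ∈ S := by
    intro n
    induction n with
    | zero => simpa using ha₀
    | succ n ih =>
      convert hmaps _ ih using 1
      linear_combination (-1 : ℝ) * hfix
  have hlim : Tendsto (fun n : ℕ => A + q ^ n * (a₀ - A)) atTop (𝓝 A) := by
    simpa using tendsto_const_nhds.add
      ((tendsto_pow_atTop_nhds_zero_of_lt_one hq0 hq1).mul_const (a₀ - A))
  exact hS.mem_of_tendsto hlim (Eventually.of_forall hiter)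

theorem isClosed_setOf_forall_le {ι : Type*} (x : ι → ℝ) : IsClosed {a | ∀ i, x i ≤ a} := by
  rw [ofPred_forall]
  exact isClosed_iInter fun i => isClosed_Ici

section FiniteInf

variable {U : Type*} [Finite U] [Nonempty U]

theorem ciInf_sub_ciInf_le_of_forall_sub_le {g h : U → ℝ} {C : ℝ}
    (hC : ∀ u, g u - h u ≤ C) : (⨅ u, g u) - ⨅ u, h u ≤ C := by
  obtain ⟨u, hu⟩ := exists_eq_ciInf_of_finite (f := h)
  have := ciInf_le (Set.finite_range g).bddBelow u
  linarith [hC u]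

theorem abs_ciInf_sub_ciInf_le {g h : U → ℝ} {C : ℝ} (hC : ∀ u, |g u - h u| ≤ C) :
    |(⨅ u, g u) - ⨅ u, h u| ≤ C :=
  abs_sub_le_iff.2
    ⟨ciInf_sub_ciInf_le_of_forall_sub_le fun u => (abs_le.1 (hC u)).2,
      ciInf_sub_ciInf_le_of_forall_sub_le fun u => by linarith [(abs_le.1 (hC u)).1]⟩

end FiniteInf

section Integral

variable {α : Type*} [MeasurableSpace α] {μ : Measure α} {f : α → ℝ} {C : ℝ}

theorem Measurable.integrable_of_forall_abs_le [IsFiniteMeasure μ] (hf : Measurable f)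
    (h : ∀ x, |f x| ≤ C) : Integrable f μ :=
  Integrable.of_bound hf.aestronglyMeasurable C
    (ae_of_all _ fun x => (Real.norm_eq_abs _).trans_le (h x))

theorem abs_integral_le_of_forall_abs_le [IsProbabilityMeasure μ] (h : ∀ x, |f x| ≤ C) :
    |∫ x, f x ∂μ| ≤ C := by
  simpa using norm_integral_le_of_norm_le_const (μ := μ)
    (ae_of_all _ fun x => (Real.norm_eq_abs (f x)).trans_le (h x))

end Integral

theorem supNorm_nonneg {Z U : Type*} (c : Z → U → ℝ) : 0 ≤ supNorm c :=
  Real.iSup_nonneg fun _ => abs_nonneg _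

theorem abs_le_supNorm {Z U : Type*} {c : Z → U → ℝ} (hc : ∃ M, ∀ z u, |c z u| ≤ M)
    (z : Z) (u : U) : |c z u| ≤ supNorm c := by
  obtain ⟨M, hM⟩ := hc
  exact le_ciSup (f := fun p : Z × U => |c p.1 p.2|)
    ⟨M, by rintro _ ⟨p, rfl⟩; exact hM p.1 p.2⟩ (z, u)

theorem continuous_of_blNormLE {S : Type*} [PseudoMetricSpace S] {f : S → ℝ} {C : ℝ}
    (hf : blNormLE dist f C) : Continuous f := by
  obtain ⟨-, b, -, hb, -, -, hlip⟩ := hf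
  exact (LipschitzWith.of_dist_le_mul (K := b.toNNReal) fun x y => by
    rw [Real.dist_eq, Real.coe_toNNReal _ hb]; exact hlip x y).continuous

noncomputable def bellman {Z U : Type*} [MeasurableSpace Z] (c : Z → U → ℝ) (β : ℝ)
    (η : Z → U → Measure Z) (J : Z → ℝ) (z : Z) : ℝ :=
  ⨅ u, (c z u + β * ∫ z₁, J z₁ ∂(η z u))

section Bellman

variable {Z U : Type*} [MeasurableSpace Z] [Finite U] [Nonempty U] {c : Z → U → ℝ} {β : ℝ}
  {η : Z → U → Measure Z} {J J' : Z → ℝ}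

theorem abs_bellman_le [∀ z u, IsProbabilityMeasure (η z u)] (hβ : 0 ≤ β) {K a : ℝ}
    (hc : ∀ z u, |c z u| ≤ K) (hJ : ∀ z, |J z| ≤ a) (z : Z) :
    |bellman c β η J z| ≤ K + β * a := by
  have h := abs_ciInf_sub_ciInf_le (h := fun _ : U => (0 : ℝ)) (C := K + β * a) fun u =>
    calc |c z u + β * ∫ z₁, J z₁ ∂(η z u) - 0|
        ≤ |c z u| + |β * ∫ z₁, J z₁ ∂(η z u)| := by rw [sub_zero]; exact abs_add_le _ _
      _ = |c z u| + β * |∫ z₁, J z₁ ∂(η z u)| := by rw [abs_mul, abs_of_nonneg hβ]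
      _ ≤ K + β * a := by gcongr; exacts [hc z u, abs_integral_le_of_forall_abs_le hJ]
  simpa only [ciInf_const, sub_zero, bellman] using h

theorem abs_bellman_sub_bellman_le [∀ z u, IsProbabilityMeasure (η z u)] (hβ : 0 ≤ β)
    (hJ : ∀ z u, Integrable J (η z u)) (hJ' : ∀ z u, Integrable J' (η z u)) {a : ℝ}
    (h : ∀ z, |J z - J' z| ≤ a) (z : Z) :
    |bellman c β η J z - bellman c β η J' z| ≤ β * a :=
  abs_ciInf_sub_ciInf_le fun u =>
    calc |c z u + β * ∫ z₁, J z₁ ∂(η z u) - (c z u + β * ∫ z₁, J' z₁ ∂(η z u))|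
        = |β * ∫ z₁, J z₁ - J' z₁ ∂(η z u)| := by
          rw [integral_sub (hJ z u) (hJ' z u)]; congr 1; ring
      _ = β * |∫ z₁, J z₁ - J' z₁ ∂(η z u)| := by rw [abs_mul, abs_of_nonneg hβ]
      _ ≤ β * a := by gcongr; exact abs_integral_le_of_forall_abs_le h

theorem abs_bellman_sub_bellman_le_mul_dist [MetricSpace Z] (hβ : 0 ≤ β) {K αZ C : ℝ}
    (hc : ∀ x y u, |c x u - c y u| ≤ K * dist x y) (hη : blContract η αZ)
    (hJ : blNormLE dist J C) (x y : Z) :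
    |bellman c β η J x - bellman c β η J y| ≤ (K + β * (αZ * C)) * dist x y :=
  abs_ciInf_sub_ciInf_le fun u =>
    calc |c x u + β * ∫ z₁, J z₁ ∂(η x u) - (c y u + β * ∫ z₁, J z₁ ∂(η y u))|
        = |c x u - c y u + β * (∫ z₁, J z₁ ∂(η x u) - ∫ z₁, J z₁ ∂(η y u))| := by
          congr 1; ring
      _ ≤ |c x u - c y u| + |β * (∫ z₁, J z₁ ∂(η x u) - ∫ z₁, J z₁ ∂(η y u))| :=
          abs_add_le _ _
      _ = |c x u - c y u| + β * |∫ z₁, J z₁ ∂(η x u) - ∫ z₁, J z₁ ∂(η y u)| := by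
          rw [abs_mul, abs_of_nonneg hβ]
      _ ≤ K * dist x y + β * (αZ * C * dist x y) := by
          gcongr; exacts [hc x y u, hη J C hJ u x y]
      _ = (K + β * (αZ * C)) * dist x y := by ring

theorem abs_le_of_eq_bellman [∀ z u, IsProbabilityMeasure (η z u)] (hβ : 0 ≤ β)
    (hβ1 : β < 1) {K : ℝ} (hc : ∀ z u, |c z u| ≤ K) (hJ : ∀ z, J z = bellman c β η J z)
    (hJ_bdd : ∃ a₀, ∀ z, |J z| ≤ a₀) : ∀ z, |J z| ≤ K / (1 - β) := by
  obtain ⟨a₀, ha₀⟩ := hJ_bdd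
  exact (isClosed_setOf_forall_le _).div_one_sub_mem_of_forall_add_mul_mem hβ hβ1 ha₀
    fun a ha z => hJ z ▸ abs_bellman_le hβ hc ha z

theorem abs_sub_le_mul_dist_of_eq_bellman [MetricSpace Z] (hβ : 0 ≤ β) {K αZ A : ℝ}
    (hαZ : 0 ≤ αZ) (hβαZ : β * αZ < 1) (hK : 0 ≤ K) (hA : 0 ≤ A)
    (hc : ∀ x y u, |c x u - c y u| ≤ K * dist x y) (hη : blContract η αZ)
    (hJ : ∀ z, J z = bellman c β η J z) (hJ_bdd : ∀ z, |J z| ≤ A)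
    (hJ_lip : ∃ b₀, 0 ≤ b₀ ∧ ∀ x y, |J x - J y| ≤ b₀ * dist x y) (x y : Z) :
    |J x - J y| ≤ (K + β * αZ * A) / (1 - β * αZ) * dist x y := by
  obtain ⟨b₀, hb₀⟩ := hJ_lip
  have hq : 0 ≤ β * αZ := mul_nonneg hβ hαZ
  have hS : IsClosed {b | 0 ≤ b ∧ ∀ x y, |J x - J y| ≤ b * dist x y} := by
    simp only [ofPred_and, ofPred_forall]
    exact isClosed_Ici.inter <| isClosed_iInter fun x => isClosed_iInter fun y =>
      isClosed_le continuous_const (continuous_id.mul continuous_const)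
  refine (hS.div_one_sub_mem_of_forall_add_mul_mem hq hβαZ hb₀ fun b ⟨hb, hJb⟩ =>
    ⟨add_nonneg (add_nonneg hK (mul_nonneg hq hA)) (mul_nonneg hq hb), fun x y => ?_⟩).2 x y
  rw [hJ x, hJ y]
  convert abs_bellman_sub_bellman_le_mul_dist hβ hc hη
    ⟨A, b, hA, hb, le_rfl, hJ_bdd, hJb⟩ x y using 2
  ring

theorem abs_sub_le_of_eq_bellman_comp [MetricSpace Z] [∀ z u, IsProbabilityMeasure (η z u)]
    (hβ : 0 ≤ β) (hβ1 : β < 1) {F : Z → Z} {Lbar A L : ℝ} (hF : ∀ z, dist z (F z) ≤ Lbar)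
    (hJ : ∀ z, J z = bellman c β η J z) (hJ' : ∀ z, J' z = bellman c β η J' (F z))
    (hJ_int : ∀ z u, Integrable J (η z u)) (hJ'_int : ∀ z u, Integrable J' (η z u))
    (hJ_bdd : ∀ z, |J z| ≤ A) (hJ'_bdd : ∃ M, ∀ z, |J' z| ≤ M)
    (hL : 0 ≤ L) (hJ_lip : ∀ x y, |J x - J y| ≤ L * dist x y) :
    ∀ z, |J' z - J z| ≤ L * Lbar / (1 - β) := by
  obtain ⟨M, hM⟩ := hJ'_bdd
  refine (isClosed_setOf_forall_le _).div_one_sub_mem_of_forall_add_mul_mem hβ hβ1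
    (a₀ := M + A) (fun z => (abs_sub _ _).trans (add_le_add (hM z) (hJ_bdd z)))
    fun e he z => ?_
  calc |J' z - J z| ≤ |J' z - J (F z)| + |J (F z) - J z| := abs_sub_le _ _ _
    _ ≤ β * e + L * Lbar := by
        gcongr
        · rw [hJ' z, hJ (F z)]
          exact abs_bellman_sub_bellman_le hβ hJ'_int hJ_int he (F z)
        · exact (hJ_lip _ _).trans
            (mul_le_mul_of_nonneg_left ((dist_comm _ _).trans_le (hF z)) hL)
    _ = L * Lbar + β * e := add_comm _ _

end Bellman

theorem statement10_general {Z U : Type*} [MetricSpace Z] [MeasurableSpace Z] [BorelSpace Z]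
    [Fintype U] [Nonempty U]
    (β : ℝ) (hβ0 : 0 < β) (hβ1 : β < 1)
    (c : Z → U → ℝ)
    (hc_bdd : ∃ M : ℝ, ∀ (z : Z) (u : U), |c z u| ≤ M)
    (hc_lip : ∀ (z z' : Z) (u : U), |c z u - c z' u| ≤ supNorm c * dist z z')
    (η : Z → U → MeasureTheory.Measure Z)
    (hη_prob : ∀ (z : Z) (u : U), MeasureTheory.IsProbabilityMeasure (η z u))
    (αZ : ℝ) (hαZ : 0 ≤ αZ)
    (hη_contract : blContract η αZ)
    (hβαZ : β * αZ < 1)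
    (F : Z → Z)
    (Lbar : ℝ) (hF_close : ∀ z : Z, dist z (F z) ≤ Lbar)
    (Jstar : Z → ℝ)
    (hJstar_bl : ∃ C : ℝ, blNormLE dist Jstar C)
    (hJstar_fix : ∀ z : Z, Jstar z = ⨅ u : U, (c z u + β * ∫ z₁, Jstar z₁ ∂(η z u)))
    (JN : Z → ℝ)
    (hJN_meas : Measurable JN)
    (hJN_bdd : ∃ M : ℝ, ∀ z : Z, |JN z| ≤ M)
    (hJN_fix : ∀ z : Z, JN z = ⨅ u : U, (c (F z) u + β * ∫ z₁, JN z₁ ∂(η (F z) u))) :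
    ∀ z : Z, |JN z - Jstar z| ≤
      ((αZ - 1) * β + 1) / ((1 - β) ^ 2 * (1 - αZ * β)) * supNorm c * Lbar := by
  have := hη_prob
  have hJstar : ∀ z, Jstar z = bellman c β η Jstar z := hJstar_fix
  obtain ⟨C₀, hC₀⟩ := hJstar_bl
  have hJstar_meas : Measurable Jstar := (continuous_of_blNormLE hC₀).measurable
  obtain ⟨a₀, b₀, -, hb₀, -, hJstar_a₀, hJstar_b₀⟩ := hC₀
  have hK : 0 ≤ supNorm c := supNorm_nonneg c
  have hA0 : 0 ≤ supNorm c / (1 - β) := div_nonneg hK (sub_pos.2 hβ1).le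
  have hA := abs_le_of_eq_bellman hβ0.le hβ1 (abs_le_supNorm hc_bdd) hJstar ⟨a₀, hJstar_a₀⟩
  have hL := abs_sub_le_mul_dist_of_eq_bellman hβ0.le hαZ hβαZ hK hA0 hc_lip hη_contract
    hJstar hA ⟨b₀, hb₀, hJstar_b₀⟩
  have hL0 : 0 ≤ (supNorm c + β * αZ * (supNorm c / (1 - β))) / (1 - β * αZ) :=
    div_nonneg (add_nonneg hK (mul_nonneg (mul_nonneg hβ0.le hαZ) hA0)) (sub_pos.2 hβαZ).le
  obtain ⟨M, hM⟩ := hJN_bdd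
  intro z
  convert abs_sub_le_of_eq_bellman_comp hβ0.le hβ1 hF_close hJstar hJN_fix
    (fun _ _ => hJstar_meas.integrable_of_forall_abs_le hA)
    (fun _ _ => hJN_meas.integrable_of_forall_abs_le hM) hA ⟨M, hM⟩ hL0 hL z using 1
  rw [mul_comm αZ β]
  field_simp [(sub_pos.2 hβ1).ne', (sub_pos.2 hβαZ).ne']
  ring

theorem statement10 {Z U : Type*} [MetricSpace Z] [MeasurableSpace Z] [BorelSpace Z]
    [Fintype U] [Nonempty U]
    (β : ℝ) (hβ0 : 0 < β) (hβ1 : β < 1)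
    (c : Z → U → ℝ)
    (hc_meas : ∀ u : U, Measurable fun z : Z => c z u)
    (hc_bdd : ∃ M : ℝ, ∀ (z : Z) (u : U), |c z u| ≤ M)
    (hc_lip : ∀ (z z' : Z) (u : U), |c z u - c z' u| ≤ supNorm c * dist z z')
    (η : Z → U → MeasureTheory.Measure Z)
    (hη_meas : ∀ u : U, Measurable fun z : Z => η z u)
    (hη_prob : ∀ (z : Z) (u : U), MeasureTheory.IsProbabilityMeasure (η z u))
    (αZ : ℝ) (hαZ : 0 ≤ αZ)
    (hη_contract : blContract η αZ)
    (hβαZ : β * αZ < 1)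
    (F : Z → Z) (hF_meas : Measurable F)
    (Lbar : ℝ) (hF_close : ∀ z : Z, dist z (F z) ≤ Lbar)
    (Jstar : Z → ℝ)
    (hJstar_bl : ∃ C : ℝ, blNormLE dist Jstar C)
    (hJstar_fix : ∀ z : Z, Jstar z = ⨅ u : U, (c z u + β * ∫ z₁, Jstar z₁ ∂(η z u)))
    (JN : Z → ℝ)
    (hJN_meas : Measurable JN)
    (hJN_bdd : ∃ M : ℝ, ∀ z : Z, |JN z| ≤ M)
    (hJN_fix : ∀ z : Z, JN z = ⨅ u : U, (c (F z) u + β * ∫ z₁, JN z₁ ∂(η (F z) u))) :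
    ∀ z : Z, |JN z - Jstar z| ≤
      ((αZ - 1) * β + 1) / ((1 - β) ^ 2 * (1 - αZ * β)) * supNorm c * Lbar :=
  statement10_general β hβ0 hβ1 c hc_bdd hc_lip η hη_prob αZ hαZ hη_contract hβαZ F Lbar hF_close
    Jstar hJstar_bl hJstar_fix JN hJN_meas hJN_bdd hJN_fix
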